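/- (Theorem 1) For all real numbers s, t, u, v, one has τ(s,t)·τ(u,v) ≥ [τ((s+u)/2, (t+v)/2) − τ((s+v)/2, (t+u)/2)]², where τ(s,t) := λ_s − 2λ_{(s+t)/2} + λ_t. -/

import Mathlib

/-!
Write `a = E X` and let `φ_p` be the potential with `φ_p'' x = x ^ (p - 2)`. Since `E[X - a] = 0`,
`λ_p` is the mean Bregman divergence `E[φ_p X - φ_p a - φ_p' a (X - a)]`, and Taylor's formula with
integral remainder writes it as `E ∫₀¹ (X - a)² (1 - r) (a + r (X - a)) ^ (p - 2) dr`: a mixture,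
with nonnegative weights, of the exponentials `p ↦ y ^ (p - 2)`. Hence `λ` is exponentially convex,
`∑ ξᵢ ξⱼ λ((xᵢ + xⱼ) / 2) ≥ 0`. With weights `(l, -l, 1, -1)` at the points `(s, t, u, v)` this is a
nonnegative quadratic polynomial in `l` with coefficients `τ(s,t)`, twice the bracket, and
`τ(u,v)`; the inequality is its discriminant condition.
-/

open MeasureTheory

/-- The moment difference `λ_s(X)` of a positive random variable `X`. -/
noncomputable def momentLambda {Ω : Type*} [MeasurableSpace Ω] (μ : Measure Ω) (X : Ω → ℝ)
    (s : ℝ) : ℝ :=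
  if s = 0 then Real.log (∫ ω, X ω ∂μ) - ∫ ω, Real.log (X ω) ∂μ
  else if s = 1 then (∫ ω, X ω * Real.log (X ω) ∂μ) - (∫ ω, X ω ∂μ) * Real.log (∫ ω, X ω ∂μ)
  else ((∫ ω, X ω ^ s ∂μ) - (∫ ω, X ω ∂μ) ^ s) / (s * (s - 1))

/-- `τ(s,t) := λ_s - 2λ_{(s+t)/2} + λ_t`. -/
noncomputable def momentTau {Ω : Type*} [MeasurableSpace Ω] (μ : Measure Ω) (X : Ω → ℝ)
    (s t : ℝ) : ℝ :=
  momentLambda μ X s - 2 * momentLambda μ X ((s + t) / 2) + momentLambda μ X t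

open Set

/-- Exponential convexity in the sense of Bernstein, in Jensen (midpoint) form. -/
def IsExponentiallyConvex (F : ℝ → ℝ) : Prop :=
  ∀ (n : ℕ) (x ξ : Fin n → ℝ), 0 ≤ ∑ i, ∑ j, ξ i * ξ j * F ((x i + x j) / 2)

noncomputable def midpointSecondDiff (F : ℝ → ℝ) (s t : ℝ) : ℝ :=
  F s - 2 * F ((s + t) / 2) + F t

namespace IsExponentiallyConvex

variable {F : ℝ → ℝ}

theorem quadratic_nonneg (hF : IsExponentiallyConvex F) (s t u v l : ℝ) :
    0 ≤ midpointSecondDiff F s t * (l * l)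
      + 2 * (midpointSecondDiff F ((s + u) / 2) ((t + v) / 2)
        - midpointSecondDiff F ((s + v) / 2) ((t + u) / 2)) * l
      + midpointSecondDiff F u v := by
  -- the two midpoints `(s + t + u + v) / 4` occurring in the cross term cancel
  have h := hF 4 ![s, t, u, v] ![l, -l, 1, -1]
  simp only [Fin.sum_univ_four, Matrix.cons_val] at h
  unfold midpointSecondDiff
  ring_nf at h ⊢
  linarith

theorem sq_sub_midpointSecondDiff_le (hF : IsExponentiallyConvex F) (s t u v : ℝ) :
    (midpointSecondDiff F ((s + u) / 2) ((t + v) / 2)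
        - midpointSecondDiff F ((s + v) / 2) ((t + u) / 2)) ^ 2
      ≤ midpointSecondDiff F s t * midpointSecondDiff F u v := by
  have h := discrim_le_zero (hF.quadratic_nonneg s t u v)
  rw [discrim] at h
  linarith

theorem const_mul (hF : IsExponentiallyConvex F) {c : ℝ} (hc : 0 ≤ c) :
    IsExponentiallyConvex fun p => c * F p := by
  intro n x ξ
  have h : ∑ i, ∑ j, ξ i * ξ j * (c * F ((x i + x j) / 2))
      = c * ∑ i, ∑ j, ξ i * ξ j * F ((x i + x j) / 2) := by
    simp only [Finset.mul_sum]
    congr! 2 with i _ j _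
    ring
  rw [h]
  exact mul_nonneg hc (hF n x ξ)

theorem integral {Ω : Type*} [MeasurableSpace Ω] {μ : Measure Ω} {g : ℝ → Ω → ℝ}
    (hint : ∀ p, Integrable (g p) μ) (hg : ∀ᵐ ω ∂μ, IsExponentiallyConvex fun p => g p ω) :
    IsExponentiallyConvex fun p => ∫ ω, g p ω ∂μ := by
  intro n x ξ
  have h : ∑ i, ∑ j, ξ i * ξ j * ∫ ω, g ((x i + x j) / 2) ω ∂μ
      = ∫ ω, ∑ i, ∑ j, ξ i * ξ j * g ((x i + x j) / 2) ω ∂μ := by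
    rw [integral_finsetSum _ fun i _ => integrable_finsetSum _ fun j _ => (hint _).const_mul _]
    refine Finset.sum_congr rfl fun i _ => ?_
    rw [integral_finsetSum _ fun j _ => (hint _).const_mul _]
    simp only [integral_const_mul]
  rw [h]
  exact integral_nonneg_of_ae (hg.mono fun ω hω => hω n x ξ)

end IsExponentiallyConvex

theorem isExponentiallyConvex_rpow_sub {b : ℝ} (hb : 0 < b) (c : ℝ) :
    IsExponentiallyConvex fun p => b ^ (p - c) := by
  intro n x ξ
  have h : ∑ i, ∑ j, ξ i * ξ j * b ^ ((x i + x j) / 2 - c)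
      = (∑ i, ξ i * b ^ ((x i - c) / 2)) ^ 2 := by
    rw [sq, Finset.sum_mul_sum]
    refine Finset.sum_congr rfl fun i _ => Finset.sum_congr rfl fun j _ => ?_
    rw [show (x i + x j) / 2 - c = (x i - c) / 2 + (x j - c) / 2 by ring, Real.rpow_add hb]
    ring
  rw [h]
  positivity

theorem add_mul_sub_mem_uIcc (a x : ℝ) {r : ℝ} (hr : r ∈ Icc (0 : ℝ) 1) :
    a + r * (x - a) ∈ uIcc a x :=
  (convex_uIcc a x).add_smul_sub_mem left_mem_uIcc right_mem_uIcc hr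

theorem pos_of_mem_uIcc {a x y : ℝ} (ha : 0 < a) (hx : 0 < x) (hy : y ∈ uIcc a x) : 0 < y :=
  lt_of_lt_of_le (lt_min ha hx) hy.1

theorem intervalIntegrable_taylorRemainder {f'' : ℝ → ℝ} {a x : ℝ}
    (hf'' : ContinuousOn f'' (uIcc a x)) :
    IntervalIntegrable (fun r => (x - a) ^ 2 * (1 - r) * f'' (a + r * (x - a))) volume 0 1 := by
  refine ContinuousOn.intervalIntegrable (ContinuousOn.mul (by fun_prop) ?_)
  refine hf''.comp (by fun_prop) fun r hr => add_mul_sub_mem_uIcc a x ?_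
  rwa [uIcc_of_le zero_le_one] at hr

theorem sub_sub_mul_eq_integral_of_hasDerivAt {f f' f'' : ℝ → ℝ} {a x : ℝ}
    (hf : ∀ y ∈ uIcc a x, HasDerivAt f (f' y) y) (hf' : ∀ y ∈ uIcc a x, HasDerivAt f' (f'' y) y)
    (hf'' : ContinuousOn f'' (uIcc a x)) :
    f x - f a - f' a * (x - a) =
      ∫ r in (0 : ℝ)..1, (x - a) ^ 2 * (1 - r) * f'' (a + r * (x - a)) := by
  set d := x - a
  have hseg : ∀ r ∈ uIcc (0 : ℝ) 1, a + r * d ∈ uIcc a x := fun r hr =>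
    add_mul_sub_mem_uIcc a x (by rwa [uIcc_of_le zero_le_one] at hr)
  -- `r ↦ f (a + r d) + (1 - r) d f' (a + r d)` is an antiderivative of the remainder integrand
  have hG : ∀ r ∈ uIcc (0 : ℝ) 1, HasDerivAt
      (fun r => f (a + r * d) + (1 - r) * d * f' (a + r * d))
      (d ^ 2 * (1 - r) * f'' (a + r * d)) r := fun r hr => by
    have hlin : HasDerivAt (fun r : ℝ => a + r * d) d r := by
      simpa using ((hasDerivAt_id r).mul_const d).const_add a
    have h1 := (hf _ (hseg r hr)).comp r hlin
    have h2 := (((hasDerivAt_id r).const_sub 1).mul_const d).mul ((hf' _ (hseg r hr)).comp r hlin)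
    refine (h1.add h2).congr_deriv ?_
    simp only [Function.comp_apply, id]
    ring
  rw [intervalIntegral.integral_eq_sub_of_hasDerivAt hG (intervalIntegrable_taylorRemainder hf'')]
  simp only [d, zero_mul, add_zero, one_mul, add_sub_cancel, sub_zero, sub_self]
  ring

noncomputable def momentPotential (p : ℝ) : ℝ → ℝ :=
  if p = 0 then fun x => -Real.log x
  else if p = 1 then fun x => x * Real.log x
  else fun x => x ^ p / (p * (p - 1))

noncomputable def momentPotentialDeriv (p : ℝ) : ℝ → ℝ :=
  if p = 0 then fun x => -x⁻¹
  else if p = 1 then fun x => Real.log x + 1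
  else fun x => x ^ (p - 1) / (p - 1)

theorem hasDerivAt_momentPotential (p : ℝ) {x : ℝ} (hx : 0 < x) :
    HasDerivAt (momentPotential p) (momentPotentialDeriv p x) x := by
  unfold momentPotential momentPotentialDeriv
  split_ifs with h0 h1
  · exact (Real.hasDerivAt_log hx.ne').neg
  · exact Real.hasDerivAt_mul_log hx.ne'
  · have h1' : p - 1 ≠ 0 := sub_ne_zero.mpr h1
    refine ((Real.hasDerivAt_rpow_const (Or.inl hx.ne')).div_const _).congr_deriv ?_
    field_simp

theorem hasDerivAt_momentPotentialDeriv (p : ℝ) {x : ℝ} (hx : 0 < x) :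
    HasDerivAt (momentPotentialDeriv p) (x ^ (p - 2)) x := by
  unfold momentPotentialDeriv
  split_ifs with h0 h1
  · subst h0
    refine (hasDerivAt_inv hx.ne').neg.congr_deriv ?_
    rw [zero_sub, Real.rpow_neg hx.le, neg_neg]
    norm_cast
  · subst h1
    refine ((Real.hasDerivAt_log hx.ne').add_const 1).congr_deriv ?_
    norm_num [Real.rpow_neg_one]
  · have h1' : p - 1 ≠ 0 := sub_ne_zero.mpr h1
    refine ((Real.hasDerivAt_rpow_const (Or.inl hx.ne')).div_const _).congr_deriv ?_
    rw [show p - 1 - 1 = p - 2 by ring]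
    field_simp

theorem continuousOn_rpow_const_uIcc {a x : ℝ} (ha : 0 < a) (hx : 0 < x) (q : ℝ) :
    ContinuousOn (fun y => y ^ q) (uIcc a x) :=
  fun _ hy =>
    (Real.continuousAt_rpow_const _ _ (Or.inl (pos_of_mem_uIcc ha hx hy).ne')).continuousWithinAt

noncomputable def momentBregman (p x a : ℝ) : ℝ :=
  momentPotential p x - momentPotential p a - momentPotentialDeriv p a * (x - a)

theorem momentBregman_eq_integral {a x : ℝ} (ha : 0 < a) (hx : 0 < x) (p : ℝ) :
    momentBregman p x a = ∫ r in (0 : ℝ)..1, (x - a) ^ 2 * (1 - r) * (a + r * (x - a)) ^ (p - 2) :=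
  sub_sub_mul_eq_integral_of_hasDerivAt
    (fun _ hy => hasDerivAt_momentPotential p (pos_of_mem_uIcc ha hx hy))
    (fun _ hy => hasDerivAt_momentPotentialDeriv p (pos_of_mem_uIcc ha hx hy))
    (continuousOn_rpow_const_uIcc ha hx _)

theorem isExponentiallyConvex_momentBregman {a x : ℝ} (ha : 0 < a) (hx : 0 < x) :
    IsExponentiallyConvex fun p => momentBregman p x a := by
  simp_rw [momentBregman_eq_integral ha hx, intervalIntegral.integral_of_le zero_le_one]
  refine IsExponentiallyConvex.integral
    (fun p => (intervalIntegrable_taylorRemainder (continuousOn_rpow_const_uIcc ha hx _)).1) ?_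
  filter_upwards [ae_restrict_mem measurableSet_Ioc] with r hr
  have hpos := pos_of_mem_uIcc ha hx (add_mul_sub_mem_uIcc a x (Ioc_subset_Icc_self hr))
  exact (isExponentiallyConvex_rpow_sub hpos 2).const_mul
    (mul_nonneg (sq_nonneg _) (sub_nonneg.mpr hr.2))

theorem integral_pos_of_ae_pos {Ω : Type*} [MeasurableSpace Ω] {μ : Measure Ω} [NeZero μ]
    {f : Ω → ℝ} (hf : Integrable f μ) (hpos : ∀ᵐ ω ∂μ, 0 < f ω) : 0 < ∫ ω, f ω ∂μ := by
  have hsupp : μ (Function.support f)ᶜ = 0 := ae_iff.mp (hpos.mono fun _ h => h.ne')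
  rw [integral_pos_iff_support_of_nonneg_ae (hpos.mono fun _ h => h.le) hf,
    measure_congr (ae_eq_univ.mpr hsupp)]
  exact Measure.measure_univ_pos.mpr (NeZero.ne μ)

section Moments

variable {Ω : Type*} [MeasurableSpace Ω] {μ : Measure Ω} {X : Ω → ℝ}

theorem momentLambda_eq_integral_sub (p : ℝ) :
    momentLambda μ X p = ∫ ω, momentPotential p (X ω) ∂μ - momentPotential p (∫ ω, X ω ∂μ) := by
  unfold momentLambda momentPotential
  split_ifs with h0 h1
  · rw [integral_neg]; ring
  · rfl
  · rw [integral_div]; ring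

theorem integrable_momentPotential (hmom : ∀ s : ℝ, Integrable (fun ω => X ω ^ s) μ)
    (hlog : Integrable (fun ω => Real.log (X ω)) μ)
    (hxlog : Integrable (fun ω => X ω * Real.log (X ω)) μ) (p : ℝ) :
    Integrable (fun ω => momentPotential p (X ω)) μ := by
  unfold momentPotential
  split_ifs
  exacts [hlog.neg, hxlog, (hmom p).div_const _]

theorem momentLambda_eq_integral_momentBregman [IsProbabilityMeasure μ] (hX : Integrable X μ)
    {p : ℝ} (hp : Integrable (fun ω => momentPotential p (X ω)) μ) :
    momentLambda μ X p = ∫ ω, momentBregman p (X ω) (∫ ω, X ω ∂μ) ∂μ := by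
  have hφ : Integrable
      (fun ω => momentPotential p (X ω) - momentPotential p (∫ ω, X ω ∂μ)) μ :=
    hp.sub (integrable_const _)
  have hlin : Integrable
      (fun ω => momentPotentialDeriv p (∫ ω, X ω ∂μ) * (X ω - ∫ ω, X ω ∂μ)) μ :=
    (hX.sub (integrable_const _)).const_mul _
  unfold momentBregman
  rw [integral_sub hφ hlin, integral_sub hp (integrable_const _), integral_const_mul,
    integral_sub hX (integrable_const _)]
  simp only [integral_const, probReal_univ, one_smul, sub_self, mul_zero, sub_zero]
  exact momentLambda_eq_integral_sub p

theorem isExponentiallyConvex_momentLambda [IsProbabilityMeasure μ] (hpos : ∀ᵐ ω ∂μ, 0 < X ω)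
    (hmom : ∀ s : ℝ, Integrable (fun ω => X ω ^ s) μ)
    (hlog : Integrable (fun ω => Real.log (X ω)) μ)
    (hxlog : Integrable (fun ω => X ω * Real.log (X ω)) μ) :
    IsExponentiallyConvex (momentLambda μ X) := by
  have hX : Integrable X μ := by simpa using hmom 1
  have hmean : 0 < ∫ ω, X ω ∂μ := integral_pos_of_ae_pos hX hpos
  have hpot := integrable_momentPotential hmom hlog hxlog
  have hrepr : momentLambda μ X = fun p => ∫ ω, momentBregman p (X ω) (∫ ω, X ω ∂μ) ∂μ :=
    funext fun p => momentLambda_eq_integral_momentBregman hX (hpot p)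
  rw [hrepr]
  refine IsExponentiallyConvex.integral (fun p => ?_) ?_
  · exact ((hpot p).sub (integrable_const _)).sub ((hX.sub (integrable_const _)).const_mul _)
  · filter_upwards [hpos] with ω hω using isExponentiallyConvex_momentBregman hmean hω

end Moments

theorem theorem1_general {Ω : Type*} [MeasurableSpace Ω] (μ : Measure Ω) [IsProbabilityMeasure μ]
    (X : Ω → ℝ) (hpos : ∀ᵐ ω ∂μ, 0 < X ω)
    (hmom : ∀ s : ℝ, Integrable (fun ω => X ω ^ s) μ)
    (hlog : Integrable (fun ω => Real.log (X ω)) μ)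
    (hxlog : Integrable (fun ω => X ω * Real.log (X ω)) μ)
    (s t u v : ℝ) :
    momentTau μ X s t * momentTau μ X u v ≥
      (momentTau μ X ((s + u) / 2) ((t + v) / 2) -
        momentTau μ X ((s + v) / 2) ((t + u) / 2)) ^ 2 :=
  (isExponentiallyConvex_momentLambda hpos hmom hlog hxlog).sq_sub_midpointSecondDiff_le s t u v

theorem theorem1 {Ω : Type*} [MeasurableSpace Ω] (μ : Measure Ω) [IsProbabilityMeasure μ]
    (X : Ω → ℝ) (hX : Measurable X) (hpos : ∀ᵐ ω ∂μ, 0 < X ω)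
    (hmom : ∀ s : ℝ, Integrable (fun ω => X ω ^ s) μ)
    (hlog : Integrable (fun ω => Real.log (X ω)) μ)
    (hxlog : Integrable (fun ω => X ω * Real.log (X ω)) μ)
    (s t u v : ℝ) :
    momentTau μ X s t * momentTau μ X u v ≥
      (momentTau μ X ((s + u) / 2) ((t + v) / 2) -
        momentTau μ X ((s + v) / 2) ((t + u) / 2)) ^ 2 :=
  theorem1_general μ X hpos hmom hlog hxlog s t u v
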